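/- Suppose the output sequence x satisfies x_k = a_{σ(k)} x_{k-1} + b_{σ(k)} u_{k-1} where σ(k) ∈ {1,2}. Then for every k, the vector c₂ = (1, -(a₁+a₂), -(b₁+b₂), a₁a₂, a₁b₂+b₁a₂, b₁b₂) satisfies c₂ᵀ ν₂(r_k) = 0, where r_k = (x_k, x_{k-1}, u_{k-1}) and ν₂(r_k) = (x_k², x_k x_{k-1}, x_k u_{k-1}, x_{k-1}², x_{k-1} u_{k-1}, u_{k-1}²). -/

import Mathlib

theorem two_mode_form_eq_mul {R : Type*} [CommRing R] (a₁ a₂ b₁ b₂ y x v : R) :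
    1 * y ^ 2 + (-(a₁ + a₂)) * (y * x) + (-(b₁ + b₂)) * (y * v) + (a₁ * a₂) * x ^ 2 +
        (a₁ * b₂ + b₁ * a₂) * (x * v) + (b₁ * b₂) * v ^ 2 =
      (y - (a₁ * x + b₁ * v)) * (y - (a₂ * x + b₂ * v)) := by
  ring

/-- For a two-mode switched AR system `x_k = a_{σ(k)} x_{k-1} + b_{σ(k)} u_{k-1}`,
the coefficient vector `c₂` annihilates the degree-2 Veronese of the regressor. -/
theorem two_mode_decoupling (a₁ a₂ b₁ b₂ : ℝ) (x u : ℤ → ℝ)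
    (hsys : ∀ k : ℤ, x k = a₁ * x (k - 1) + b₁ * u (k - 1) ∨
      x k = a₂ * x (k - 1) + b₂ * u (k - 1)) :
    ∀ k : ℤ,
      1 * (x k) ^ 2 + (-(a₁ + a₂)) * (x k * x (k - 1)) +
        (-(b₁ + b₂)) * (x k * u (k - 1)) + (a₁ * a₂) * (x (k - 1)) ^ 2 +
        (a₁ * b₂ + b₁ * a₂) * (x (k - 1) * u (k - 1)) +
        (b₁ * b₂) * (u (k - 1)) ^ 2 = 0 := by
  intro k
  rw [two_mode_form_eq_mul, mul_eq_zero, sub_eq_zero, sub_eq_zero]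
  exact hsys k
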